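/- Let q be a power of an odd prime with q ≥ 5, let m ≥ 2 be an integer that does not divide q−1 and such that every prime factor of m divides q−1 and, if 4 divides m, then 4 divides q−1. Let l = ord_m(q), assume l divides m and set k = m/l and t = (q^l − 1)/m. Let a ∈ F_q have multiplicative order e = ∏_{p prime, p ∣ m} p^{v_p(q−1)}, assume x^m − a is irreducible over F_q, and let θ be the image of x in F_{q^m} = F_q[x]/(x^m − a). Then for every non-zero b ∈ F_q there exist integers r_0, r_1, …, r_{l−1} such that the k·l elements a^{jt + r_i} θ^{ik+1} + b, for 0 ≤ i ≤ l−1 and 0 ≤ j ≤ k−1, are pairwise distinct and all belong to the cyclic subgroup of F_{q^m}^* generated by θ + b. -/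

import Mathlib

/-!
Let `q = #F`, `θ` the root of `X ^ m - C a`, `k = m / l` and `t = (q ^ l - 1) / m`. The Frobenius
`x ↦ x ^ q` fixes `F`, so `(θ + b) ^ q ^ N = a ^ (q ^ N / m) * θ ^ (q ^ N % m) + b`; and since
`q ^ l = m * t + 1`, each application of its `l`-th power multiplies `θ` by `a ^ t`. Lifting the
exponent gives `k ∣ q - 1`, so the `l` distinct powers of `q` modulo `m` are exactly the residues
`i * k + 1` with `i < l`. Choosing `q ^ s i ≡ i * k + 1 [MOD m]` and `r i = q ^ s i / m`, the
element indexed by `(i, j)` is `(θ + b) ^ q ^ (s i + l * j)`. For distinctness, `l ≤ φ m < m`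
gives `i * k + 1 < m`, so these elements are scalar multiples of distinct basis vectors
`θ ^ (i * k + 1)`; and lifting the exponent once more gives `k ≤ orderOf (a ^ t)`, so the scalars
`a ^ (j * t)` with `j < k` differ.
-/

open Polynomial

theorem Nat.Prime.not_dvd_of_dvd_sub_one {p q : ℕ} (hp : p.Prime) (hq : 1 ≤ q)
    (h : p ∣ q - 1) : ¬ p ∣ q := fun hpq =>
  hp.not_dvd_one (((Nat.coprime_self_sub_right hq).2 (Nat.coprime_one_right q)).gcd_eq_one ▸
    Nat.dvd_gcd hpq h)

theorem Nat.factorization_pow_sub_one {p q n : ℕ} (hp : p.Prime) (hq : 1 < q) (hpq : p ∣ q - 1)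
    (hn : n ≠ 0) (h : Odd p ∨ 4 ∣ q - 1 ∨ ¬ p ∣ n) :
    (q ^ n - 1).factorization p = (q - 1).factorization p + n.factorization p := by
  have := Fact.mk hp
  have hq1 : q - 1 ≠ 0 := by omega
  have hqn : q ^ n - 1 ≠ 0 := Nat.sub_ne_zero_of_lt (Nat.one_lt_pow hn hq)
  simp only [Nat.factorization_def _ hp]
  rw [← Nat.cast_inj (R := ℕ∞), Nat.cast_add, padicValNat_eq_emultiplicity hqn,
    padicValNat_eq_emultiplicity hq1, padicValNat_eq_emultiplicity hn]
  have hpq' : ¬ p ∣ q := hp.not_dvd_of_dvd_sub_one hq.le hpq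
  have hz : ∀ c : ℕ, c ∣ q - 1 → (c : ℤ) ∣ (q : ℤ) - 1 := fun c hc => by
    simpa [Nat.cast_sub hq.le] using Int.natCast_dvd_natCast.mpr hc
  have hcast : ((q ^ n - 1 : ℕ) : ℤ) = (q : ℤ) ^ n - 1 ^ n := by
    rw [Nat.cast_sub (Nat.one_le_pow _ _ (by omega))]; push_cast; ring
  rcases h with hodd | h4 | hpn
  · simpa using Nat.emultiplicity_pow_sub_pow hp hodd hpq hpq' n
  · rcases hp.eq_two_or_odd' with rfl | hodd
    · rw [← Int.natCast_emultiplicity, hcast, Nat.cast_ofNat,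
        Int.two_pow_sub_pow' n (hz 4 h4) (by exact_mod_cast hpq'), ← Nat.cast_one,
        ← Nat.cast_sub hq.le]
      exact congrArg₂ (· + ·) (Int.natCast_emultiplicity 2 _) (Int.natCast_emultiplicity 2 _)
    · simpa using Nat.emultiplicity_pow_sub_pow hp hodd hpq hpq' n
  · rw [← Int.natCast_emultiplicity, hcast,
      emultiplicity_pow_sub_pow_of_prime (Nat.prime_iff_prime_int.mp hp) (hz p hpq)
        (by exact_mod_cast hpq') (by exact_mod_cast hpn),
      emultiplicity_eq_zero.mpr hpn, add_zero, ← Nat.cast_one, ← Nat.cast_sub hq.le,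
      Int.natCast_emultiplicity]

theorem Nat.factorization_prod_pow_of_mem {S : Finset ℕ} (hS : ∀ r ∈ S, r.Prime) (f : ℕ → ℕ)
    {p : ℕ} (hp : p ∈ S) : (∏ r ∈ S, r ^ f r).factorization p = f p := by
  rw [Nat.factorization_prod fun r hr => pow_ne_zero _ (hS r hr).ne_zero, Finset.sum_apply',
    Finset.sum_eq_single p (fun r hr hrp => by simp [(hS r hr).factorization_pow, hrp])
      (fun h => absurd hp h)]
  simp [(hS p hp).factorization_pow]

section PrimeFactorsDivideSubOne

variable {q m : ℕ}

theorem factorization_pow_sub_one_of_lt (hq : 1 < q)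
    (hprime : ∀ p : ℕ, p.Prime → p ∣ m → p ∣ q - 1) (h4 : 4 ∣ m → 4 ∣ q - 1)
    {p n : ℕ} (hp : p.Prime) (hn : n ≠ 0) (hlt : n.factorization p < m.factorization p) :
    (q ^ n - 1).factorization p = (q - 1).factorization p + n.factorization p := by
  have hm : m ≠ 0 := by rintro rfl; simp at hlt
  refine Nat.factorization_pow_sub_one hp hq
    (hprime p hp (Nat.dvd_of_factorization_pos hlt.ne_bot)) hn ?_
  rcases hp.eq_two_or_odd' with rfl | hodd
  · by_cases h4q : 4 ∣ q - 1
    · exact Or.inr (Or.inl h4q)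
    · -- `4 ∤ m` forces `v₂ m ≤ 1`, so `n` is odd
      have hm2 : m.factorization 2 < 2 := by
        by_contra! h
        exact h4q (h4 ((Nat.prime_two.pow_dvd_iff_le_factorization hm).2 h))
      refine Or.inr (Or.inr fun h2n => ?_)
      have := Nat.prime_two.factorization_pos_of_dvd hn h2n
      omega
  · exact Or.inl hodd

theorem factorization_div_add_factorization_div (hq : 1 < q)
    (hprime : ∀ p : ℕ, p.Prime → p ∣ m → p ∣ q - 1) (h4 : 4 ∣ m → 4 ∣ q - 1)
    {n p : ℕ} (hn : n ≠ 0) (hnm : n ∣ m) (hmq : m ∣ q ^ n - 1) (hp : p.Prime)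
    (hlt : n.factorization p < m.factorization p) :
    ((q ^ n - 1) / m).factorization p + (m / n).factorization p = (q - 1).factorization p := by
  have hm : m ≠ 0 := by rintro rfl; simp at hlt
  have hqn : q ^ n - 1 ≠ 0 := Nat.sub_ne_zero_of_lt (Nat.one_lt_pow hn hq)
  have hle := (Nat.factorization_le_iff_dvd hm hqn).2 hmq p
  rw [Nat.factorization_div hmq, Nat.factorization_div hnm, Finsupp.tsub_apply,
    Finsupp.tsub_apply, factorization_pow_sub_one_of_lt hq hprime h4 hp hn hlt] at *
  omega

theorem div_dvd_sub_one (hq : 1 < q)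
    (hprime : ∀ p : ℕ, p.Prime → p ∣ m → p ∣ q - 1) (h4 : 4 ∣ m → 4 ∣ q - 1)
    {n : ℕ} (hn : n ≠ 0) (hnm : n ∣ m) (hmq : m ∣ q ^ n - 1) :
    m / n ∣ q - 1 := by
  have hqn : q ^ n - 1 ≠ 0 := Nat.sub_ne_zero_of_lt (Nat.one_lt_pow hn hq)
  have hm : m ≠ 0 := by rintro rfl; exact hqn (zero_dvd_iff.1 hmq)
  refine (Nat.factorization_prime_le_iff_dvd (Nat.div_ne_zero_iff_of_dvd hnm |>.2 ⟨hm, hn⟩)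
    (by omega)).1 fun p hp => ?_
  by_cases hlt : n.factorization p < m.factorization p
  · have := factorization_div_add_factorization_div hq hprime h4 hn hnm hmq hp hlt
    omega
  · rw [Nat.factorization_div hnm, Finsupp.tsub_apply]
    omega

theorem div_dvd_div_gcd (hq : 1 < q)
    (hprime : ∀ p : ℕ, p.Prime → p ∣ m → p ∣ q - 1) (h4 : 4 ∣ m → 4 ∣ q - 1)
    {n e : ℕ} (hn : n ≠ 0) (hnm : n ∣ m) (hmq : m ∣ q ^ n - 1) (he : e ≠ 0)
    (hfe : ∀ p ∈ m.primeFactors, e.factorization p = (q - 1).factorization p) :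
    m / n ∣ e / e.gcd ((q ^ n - 1) / m) := by
  have hqn : q ^ n - 1 ≠ 0 := Nat.sub_ne_zero_of_lt (Nat.one_lt_pow hn hq)
  have hm : m ≠ 0 := by rintro rfl; exact hqn (zero_dvd_iff.1 hmq)
  have ht : (q ^ n - 1) / m ≠ 0 := (Nat.div_ne_zero_iff_of_dvd hmq).2 ⟨hqn, hm⟩
  have hk : m / n ≠ 0 := (Nat.div_ne_zero_iff_of_dvd hnm).2 ⟨hm, hn⟩
  refine Nat.dvd_div_of_mul_dvd ((Nat.factorization_prime_le_iff_dvd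
    (mul_ne_zero (Nat.gcd_ne_zero_left he) hk) he).1 fun p hp => ?_)
  rw [Nat.factorization_mul (Nat.gcd_ne_zero_left he) hk, Nat.factorization_gcd he ht,
    Finsupp.add_apply, Finsupp.inf_apply]
  by_cases hlt : n.factorization p < m.factorization p
  · have hpm : p ∈ m.primeFactors :=
      Nat.mem_primeFactors.2 ⟨hp, Nat.dvd_of_factorization_pos hlt.ne_bot, hm⟩
    have := factorization_div_add_factorization_div hq hprime h4 hn hnm hmq hp hlt
    rw [hfe p hpm]
    omega
  · rw [Nat.factorization_div hnm, Finsupp.tsub_apply]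
    omega

theorem div_le_orderOf_pow {G : Type*} [Monoid G] {a : G} (hq : 1 < q)
    (hprime : ∀ p : ℕ, p.Prime → p ∣ m → p ∣ q - 1) (h4 : 4 ∣ m → 4 ∣ q - 1)
    {n : ℕ} (hn : n ≠ 0) (hnm : n ∣ m) (hmq : m ∣ q ^ n - 1)
    (ha : orderOf a = ∏ p ∈ m.primeFactors, p ^ (q - 1).factorization p) :
    m / n ≤ orderOf (a ^ ((q ^ n - 1) / m)) := by
  have he : ∏ p ∈ m.primeFactors, p ^ (q - 1).factorization p ≠ 0 :=
    Finset.prod_ne_zero_iff.2 fun r hr => pow_ne_zero _ (Nat.prime_of_mem_primeFactors hr).ne_zero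
  have ha' : IsOfFinOrder a := orderOf_pos_iff.1 (ha ▸ Nat.pos_of_ne_zero he)
  refine Nat.le_of_dvd (orderOf_pos_iff.2 ha'.pow) ?_
  rw [ha'.orderOf_pow, ha]
  exact div_dvd_div_gcd hq hprime h4 hn hnm hmq he fun p hp =>
    Nat.factorization_prod_pow_of_mem (fun r => Nat.prime_of_mem_primeFactors) _ hp

end PrimeFactorsDivideSubOne

theorem ZMod.orderOf_natCast_dvd_totient {q m : ℕ} (h : q.Coprime m) :
    orderOf (q : ZMod m) ∣ m.totient :=
  orderOf_dvd_of_pow_eq_one <| by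
    simpa using (ZMod.natCast_eq_natCast_iff _ _ _).2 (Nat.ModEq.pow_totient h)

theorem ZMod.dvd_pow_orderOf_natCast_sub_one {q m : ℕ} (hq : 0 < q) :
    m ∣ q ^ orderOf (q : ZMod m) - 1 := by
  rw [← ZMod.natCast_eq_zero_iff, Nat.cast_sub (Nat.one_le_pow _ _ hq)]
  simp [pow_orderOf_eq_one]

theorem two_le_div_orderOf_natCast {q m l : ℕ} (hm : 1 < m) (hqm : q.Coprime m)
    (hl : orderOf (q : ZMod m) = l) (hlm : l ∣ m) : 2 ≤ m / l := by
  have hφ := hl ▸ ZMod.orderOf_natCast_dvd_totient hqm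
  have hφpos : 0 < m.totient := Nat.totient_pos.2 (by omega)
  have hlt : l < m := (Nat.le_of_dvd hφpos hφ).trans_lt (Nat.totient_lt m hm)
  have hpos : 0 < l := Nat.pos_of_dvd_of_pos hφ hφpos
  obtain ⟨c, rfl⟩ := hlm
  rw [Nat.mul_div_cancel_left _ hpos]
  have := Nat.lt_of_mul_lt_mul_left (a := l) (b := 1) (c := c) (by omega)
  omega

theorem exists_pow_mod_eq_mul_add_one {q m n : ℕ} (hn : orderOf (q : ZMod m) = n) (hnm : n ∣ m)
    (hk : 2 ≤ m / n) (hq : q ≡ 1 [MOD m / n]) {i : ℕ} (hi : i < n) :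
    ∃ s, q ^ s % m = i * (m / n) + 1 := by
  set k := m / n
  have hmk : m = k * n := (Nat.div_mul_cancel hnm).symm
  -- `q ^ s % m ≡ 1 [MOD k]`, so `s ↦ q ^ s % m / k` is an injective, hence onto,
  -- self-map of `Fin n`
  have hres : ∀ s, q ^ s % m = q ^ s % m / k * k + 1 := fun s => by
    have h1 : q ^ s % m % k = 1 := by
      rw [Nat.mod_mod_of_dvd _ (Dvd.intro n hmk.symm), ← Nat.mod_eq_of_lt (by omega : 1 < k)]
      simpa [Nat.ModEq] using hq.pow s
    have := Nat.div_add_mod (q ^ s % m) k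
    rw [h1] at this
    linarith
  have hm : 0 < m := hmk ▸ Nat.mul_pos (by omega) (by omega)
  let c : Fin n → Fin n := fun s => ⟨q ^ (s : ℕ) % m / k, Nat.div_lt_of_lt_mul (hmk ▸ Nat.mod_lt _ hm)⟩
  have hc : Function.Injective c := fun s s' hss' => by
    have h : q ^ (s : ℕ) % m = q ^ (s' : ℕ) % m := by
      rw [hres s, hres s']; exact congrArg (· * k + 1) (Fin.val_eq_of_eq hss')
    have h' : (q : ZMod m) ^ (s : ℕ) = (q : ZMod m) ^ (s' : ℕ) := by
      simpa using (ZMod.natCast_eq_natCast_iff' _ _ _).2 h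
    exact Fin.ext (pow_injOn_Iio_orderOf (by simp [hn]) (by simp [hn]) h')
  obtain ⟨s, hs⟩ := (Finite.injective_iff_surjective.mp hc) ⟨i, hi⟩
  exact ⟨s, by rw [hres, show q ^ (s : ℕ) % m / k = i from Fin.val_eq_of_eq hs]⟩

theorem eq_of_zpow_mul_add_eq {G : Type*} [GroupWithZero G] {a : G} (ha : a ≠ 0) {t k : ℕ}
    (hk : k ≤ orderOf (a ^ t)) (r : ℤ) {j j' : ℕ} (hj : j < k) (hj' : j' < k)
    (h : a ^ ((j : ℤ) * t + r) = a ^ ((j' : ℤ) * t + r)) : j = j' := by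
  rw [zpow_add₀ ha, zpow_add₀ ha] at h
  have h' := mul_right_cancel₀ (zpow_ne_zero r ha) h
  simp only [← Nat.cast_mul, zpow_natCast, mul_comm _ t, pow_mul] at h'
  exact pow_injOn_Iio_orderOf (hj.trans_le hk) (hj'.trans_le hk) h'

theorem AlgHom.pow_apply_of_apply_eq_algebraMap_mul {R A : Type*} [CommSemiring R] [Semiring A]
    [Algebra R A] (φ : A →ₐ[R] A) {x : A} {c : R} (h : φ x = algebraMap R A c * x) (j : ℕ) :
    (φ ^ j) x = algebraMap R A (c ^ j) * x := by
  induction j with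
  | zero => simp
  | succ j ih => rw [pow_succ', AlgHom.mul_apply, ih, map_mul, AlgHom.commutes, h, ← mul_assoc,
      ← map_mul, ← pow_succ]

section Frobenius

variable {F A : Type*} [Field F] [Fintype F] [CommRing A] [Algebra F A]

theorem FiniteField.frobeniusAlgHom_pow_apply (N : ℕ) (y : A) :
    (frobeniusAlgHom F A ^ N) y = y ^ Fintype.card F ^ N := by
  rw [AlgHom.coe_pow, coe_frobeniusAlgHom, pow_iterate]

theorem FiniteField.add_algebraMap_pow_card_pow {x : A} {a : F} {m l : ℕ}
    (hx : x ^ m = algebraMap F A a) (hml : m ∣ Fintype.card F ^ l - 1) (b : F) (s j : ℕ) :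
    (x + algebraMap F A b) ^ Fintype.card F ^ (s + l * j) =
      algebraMap F A (a ^ (j * ((Fintype.card F ^ l - 1) / m) + Fintype.card F ^ s / m)) *
        x ^ (Fintype.card F ^ s % m) + algebraMap F A b := by
  set t := (Fintype.card F ^ l - 1) / m
  have ht : Fintype.card F ^ l = m * t + 1 := by
    rw [Nat.mul_div_cancel' hml, Nat.sub_add_cancel (Nat.one_le_pow _ _ Fintype.card_pos)]
  have hpow : ∀ N, x ^ N = algebraMap F A (a ^ (N / m)) * x ^ (N % m) := fun N => by
    conv_lhs => rw [← Nat.div_add_mod N m, pow_add, pow_mul, hx, ← map_pow]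
  have hl : (frobeniusAlgHom F A ^ l) x = algebraMap F A (a ^ t) * x := by
    rw [frobeniusAlgHom_pow_apply, ht, pow_succ, pow_mul, hx, map_pow]
  rw [← frobeniusAlgHom_pow_apply, map_add, AlgHom.commutes, pow_add, pow_mul, AlgHom.mul_apply,
    AlgHom.pow_apply_of_apply_eq_algebraMap_mul _ hl j, map_mul, AlgHom.commutes,
    frobeniusAlgHom_pow_apply, hpow, ← mul_assoc, ← map_mul, ← pow_mul, ← pow_add, mul_comm t j]

end Frobenius

theorem AdjoinRoot.modByMonicHom_of_mul_root_pow {R : Type*} [CommRing R] [Nontrivial R]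
    {g : R[X]} (hg : g.Monic) (c : R) {d : ℕ} (hd : d < g.natDegree) :
    modByMonicHom hg (of g c * root g ^ d) = monomial d c := by
  rw [← mk_C, ← mk_X, ← map_pow, ← map_mul, modByMonicHom_mk, C_mul_X_pow_eq_monomial,
    (modByMonic_eq_self_iff hg).2]
  exact (degree_monomial_le d c).trans_lt
    (by rwa [degree_eq_natDegree hg.ne_zero, Nat.cast_lt])

theorem AdjoinRoot.eq_of_of_mul_root_pow_eq {R : Type*} [CommRing R] {g : R[X]} (hg : g.Monic)
    {c c' : R} {d d' : ℕ} (hc : c ≠ 0) (hd : d < g.natDegree) (hd' : d' < g.natDegree)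
    (h : of g c * root g ^ d = of g c' * root g ^ d') : d = d' ∧ c = c' := by
  have := nontrivial_of_ne c 0 hc
  have h' := congrArg (modByMonicHom hg) h
  rw [modByMonicHom_of_mul_root_pow hg c hd, modByMonicHom_of_mul_root_pow hg c' hd',
    monomial_eq_monomial_iff] at h'
  exact h'.resolve_right fun h0 => hc h0.1

theorem AdjoinRoot.injective_zpow_mul_root_pow_add {F : Type*} [Field F] {a : F} (ha : a ≠ 0)
    {m l k t : ℕ} (hlk : l * k = m) (hk : 2 ≤ k) (hkt : k ≤ orderOf (a ^ t)) (r : Fin l → ℤ)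
    (b : F) :
    Function.Injective fun p : Fin l × Fin k =>
      of (X ^ m - C a) (a ^ (((p.2 : ℕ) : ℤ) * t + r p.1)) *
        root (X ^ m - C a) ^ ((p.1 : ℕ) * k + 1) + of (X ^ m - C a) b := by
  have hbound : ∀ i : Fin l, (i : ℕ) * k + 1 < (X ^ m - C a).natDegree := fun i => by
    have := Nat.mul_le_mul_right k (Nat.succ_le_of_lt i.2)
    rw [natDegree_X_pow_sub_C, ← hlk]
    rw [Nat.succ_mul] at this
    omega
  rintro ⟨i, j⟩ ⟨i', j'⟩ h
  have hm : m ≠ 0 := hlk ▸ Nat.mul_ne_zero (by have := i.2; omega) (by omega)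
  obtain ⟨hd, hc⟩ := eq_of_of_mul_root_pow_eq (monic_X_pow_sub_C a hm)
    (zpow_ne_zero _ ha) (hbound i) (hbound i') (add_right_cancel h)
  obtain rfl : i = i' := Fin.ext (Nat.eq_of_mul_eq_mul_right (by omega) (Nat.add_right_cancel hd))
  exact Prod.ext rfl (Fin.ext (eq_of_zpow_mul_add_eq ha hkt _ j.2 j'.2 hc))

theorem binomials_in_subgroup_pairwise_distinct_general
    (F : Type*) [Field F] [Fintype F] (q m : ℕ)
    (hq : Fintype.card F = q)
    (hm2 : 2 ≤ m)
    (hprime : ∀ p : ℕ, p.Prime → p ∣ m → p ∣ (q - 1))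
    (h4 : 4 ∣ m → 4 ∣ (q - 1))
    (l k t : ℕ)
    (hl : l = orderOf ((q : ZMod m)))
    (hldvd : l ∣ m)
    (hk : k = m / l)
    (ht : t = (q ^ l - 1) / m)
    (a : F)
    (ha : orderOf a = ∏ p ∈ m.primeFactors, p ^ (q - 1).factorization p)
    (b : F) :
    ∃ r : Fin l → ℤ,
      Function.Injective (fun p : Fin l × Fin k =>
        AdjoinRoot.of (X ^ m - C a : Polynomial F)
            (a ^ (((p.2 : ℕ) : ℤ) * (t : ℤ) + r p.1)) *
          AdjoinRoot.root (X ^ m - C a : Polynomial F) ^ ((p.1 : ℕ) * k + 1) +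
          AdjoinRoot.of (X ^ m - C a : Polynomial F) b) ∧
      ∀ p : Fin l × Fin k,
        (AdjoinRoot.of (X ^ m - C a : Polynomial F)
            (a ^ (((p.2 : ℕ) : ℤ) * (t : ℤ) + r p.1)) *
          AdjoinRoot.root (X ^ m - C a : Polynomial F) ^ ((p.1 : ℕ) * k + 1) +
          AdjoinRoot.of (X ^ m - C a : Polynomial F) b)
          ∈ Submonoid.powers (AdjoinRoot.root (X ^ m - C a : Polynomial F)
            + AdjoinRoot.of (X ^ m - C a : Polynomial F) b) := by
  subst hq hk ht
  have hq1 : 1 < Fintype.card F := Fintype.one_lt_card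
  have hqm : (Fintype.card F).Coprime m := Nat.coprime_of_dvd fun p hp hpq hpm =>
    hp.not_dvd_of_dvd_sub_one hq1.le (hprime p hp hpm) hpq
  have hk2 : 2 ≤ m / l := two_le_div_orderOf_natCast (by omega) hqm hl.symm hldvd
  have hl0 : l ≠ 0 := by rintro rfl; simp at hk2
  have hmq : m ∣ Fintype.card F ^ l - 1 := hl ▸ ZMod.dvd_pow_orderOf_natCast_sub_one (by omega)
  have hkq : Fintype.card F ≡ 1 [MOD m / l] :=
    ((Nat.modEq_iff_dvd' hq1.le).2 (div_dvd_sub_one hq1 hprime h4 hl0 hldvd hmq)).symm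
  choose s hs using fun i : Fin l => exists_pow_mod_eq_mul_add_one hl.symm hldvd hk2 hkq i.2
  have he : ∏ p ∈ m.primeFactors, p ^ (Fintype.card F - 1).factorization p ≠ 0 :=
    Finset.prod_ne_zero_iff.2 fun r hr => pow_ne_zero _ (Nat.prime_of_mem_primeFactors hr).ne_zero
  have ha0 : IsOfFinOrder a := orderOf_pos_iff.1 (ha ▸ Nat.pos_of_ne_zero he)
  let r (i : Fin l) : ℤ := (Fintype.card F ^ s i / m : ℕ)
  refine ⟨r, AdjoinRoot.injective_zpow_mul_root_pow_add ha0.isUnit.ne_zero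
      (Nat.mul_div_cancel' hldvd) hk2 (div_le_orderOf_pow hq1 hprime h4 hl0 hldvd hmq ha) r b,
    fun p => ?_⟩
  have h := FiniteField.add_algebraMap_pow_card_pow (root_X_pow_sub_C_pow m a) hmq b (s p.1) p.2
  rw [hs, AdjoinRoot.algebraMap_eq] at h
  dsimp only [r]
  exact_mod_cast h ▸ Submonoid.pow_mem _ (Submonoid.mem_powers _) _

/-- Theorem 4: there exist integers `r_0, …, r_{l-1}` such that the `k·l` elements
`a^{jt + r_i} θ^{ik+1} + b` (for `0 ≤ i ≤ l-1`, `0 ≤ j ≤ k-1`) are pairwise distinct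
and all lie in the cyclic subgroup generated by `θ + b`. -/
theorem binomials_in_subgroup_pairwise_distinct
    (F : Type*) [Field F] [Fintype F] (q m : ℕ)
    (hq : Fintype.card F = q)
    (hodd : ∃ p n : ℕ, p.Prime ∧ Odd p ∧ q = p ^ n)
    (hq5 : 5 ≤ q)
    (hm2 : 2 ≤ m)
    (hmndvd : ¬ m ∣ (q - 1))
    (hprime : ∀ p : ℕ, p.Prime → p ∣ m → p ∣ (q - 1))
    (h4 : 4 ∣ m → 4 ∣ (q - 1))
    (l k t : ℕ)
    (hl : l = orderOf ((q : ZMod m)))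
    (hldvd : l ∣ m)
    (hk : k = m / l)
    (ht : t = (q ^ l - 1) / m)
    (a : F)
    (ha : orderOf a = ∏ p ∈ m.primeFactors, p ^ (q - 1).factorization p)
    (hirr : Irreducible (X ^ m - C a : Polynomial F))
    (b : F) (hb : b ≠ 0) :
    ∃ r : Fin l → ℤ,
      Function.Injective (fun p : Fin l × Fin k =>
        AdjoinRoot.of (X ^ m - C a : Polynomial F)
            (a ^ (((p.2 : ℕ) : ℤ) * (t : ℤ) + r p.1)) *
          AdjoinRoot.root (X ^ m - C a : Polynomial F) ^ ((p.1 : ℕ) * k + 1) +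
          AdjoinRoot.of (X ^ m - C a : Polynomial F) b) ∧
      ∀ p : Fin l × Fin k,
        (AdjoinRoot.of (X ^ m - C a : Polynomial F)
            (a ^ (((p.2 : ℕ) : ℤ) * (t : ℤ) + r p.1)) *
          AdjoinRoot.root (X ^ m - C a : Polynomial F) ^ ((p.1 : ℕ) * k + 1) +
          AdjoinRoot.of (X ^ m - C a : Polynomial F) b)
          ∈ Submonoid.powers (AdjoinRoot.root (X ^ m - C a : Polynomial F)
            + AdjoinRoot.of (X ^ m - C a : Polynomial F) b) :=
  binomials_in_subgroup_pairwise_distinct_general F q m hq hm2 hprime h4 l k t hl hldvd hk ht a ha b
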